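/- Let A ∈ B(H) be selfadjoint with ‖A‖ ≤ 1, and let V be a symmetry on H such that VA = -AV. Then P_V := (1/2)(1 + A + (1-A²)^{1/2} V) and Q_V := (1/2)(1 - A + (1-A²)^{1/2} V) are orthogonal projections, P_V - Q_V = A, and P_V + Q_V - 1 = (1-A²)^{1/2} V. -/

import Mathlib

open ContinuousLinearMap

variable {H : Type*} [NormedAddCommGroup H] [InnerProductSpace ℂ H] [CompleteSpace H]

/-- An orthogonal projection: a selfadjoint idempotent bounded operator. -/
def IsOrthogonalProjection (P : H →L[ℂ] H) : Prop :=
  IsSelfAdjoint P ∧ P * P = P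

/-- A symmetry: a selfadjoint unitary operator. -/
def IsSymmetry (V : H →L[ℂ] H) : Prop :=
  IsSelfAdjoint V ∧ V * V = 1

/-- Two orthogonal projections are in generic position if the four canonical
intersections of their ranges and kernels are trivial. -/
def GenericPosition (P Q : H →L[ℂ] H) : Prop :=
  LinearMap.range (P : H →ₗ[ℂ] H) ⊓ LinearMap.range (Q : H →ₗ[ℂ] H) = ⊥ ∧
  LinearMap.range (P : H →ₗ[ℂ] H) ⊓ LinearMap.ker (Q : H →ₗ[ℂ] H) = ⊥ ∧
  LinearMap.ker (P : H →ₗ[ℂ] H) ⊓ LinearMap.range (Q : H →ₗ[ℂ] H) = ⊥ ∧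
  LinearMap.ker (P : H →ₗ[ℂ] H) ⊓ LinearMap.ker (Q : H →ₗ[ℂ] H) = ⊥

/-!
Since `R` is the positive square root of `1 - A²`, it lies in the continuous functional calculus
of `1 - A²`, so it commutes with everything commuting with `1 - A²`; in particular with `A` and
with `V` (which commutes with `A²` because it anticommutes with `A`). Hence `S = R V` is
selfadjoint, anticommutes with `A` and satisfies `A² + S² = 1`, and then
`(1 + A + S)² = 2 (1 + A + S)`, likewise with `-A` in place of `A`.
-/

lemma commute_mul_self_of_mul_eq_neg_mul {B : Type*} [Ring B] {a v : B}
    (h : v * a = -(a * v)) : Commute (a * a) v := by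
  calc a * a * v = a * (a * v) := mul_assoc ..
    _ = -(a * (v * a)) := by rw [h, mul_neg, neg_neg]
    _ = -(a * v) * a := by rw [neg_mul, mul_assoc]
    _ = v * (a * a) := by rw [← h, mul_assoc]

lemma Commute.of_mul_self_of_nonneg {B : Type*} [CStarAlgebra B] [PartialOrder B]
    [StarOrderedRing B] {b x : B} (hb : 0 ≤ b) (h : Commute (b * b) x) : Commute b x := by
  rw [← CFC.sqrt_unique rfl hb, CFC.sqrt_eq_cfc]
  exact h.cfc_nnreal _

lemma isIdempotentElem_half_smul_one_add_add {𝕜 B : Type*} [Field 𝕜] [NeZero (2 : 𝕜)]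
    [Ring B] [Algebra 𝕜 B] {a s : B} (has : s * a = -(a * s)) (hsq : a * a + s * s = 1) :
    IsIdempotentElem ((1 / 2 : 𝕜) • (1 + a + s)) := by
  have hsq' : (1 + a + s) * (1 + a + s) = (2 : 𝕜) • (1 + a + s) := by
    calc (1 + a + s) * (1 + a + s)
        _ = 1 + 2 * a + 2 * s + (a * a + s * s) + (s * a + a * s) := by noncomm_ring
        _ = (2 : 𝕜) • (1 + a + s) := by
          rw [hsq, has, neg_add_cancel, ofNat_smul_eq_nsmul]
          noncomm_ring
  rw [IsIdempotentElem, smul_mul_smul_comm, hsq', smul_smul]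
  congr 1
  field_simp

lemma isOrthogonalProjection_half_smul_one_add_add {a s : H →L[ℂ] H}
    (ha : IsSelfAdjoint a) (hs : IsSelfAdjoint s)
    (has : s * a = -(a * s)) (hsq : a * a + s * s = 1) :
    IsOrthogonalProjection ((1 / 2 : ℂ) • (1 + a + s)) :=
  ⟨.smul (by simp [isSelfAdjoint_iff]) ((IsSelfAdjoint.one _).add ha |>.add hs),
    isIdempotentElem_half_smul_one_add_add has hsq⟩

theorem davis_pair_from_symmetry (A V R : H →L[ℂ] H)
    (hA : IsSelfAdjoint A)
    (hV : IsSymmetry V) (hVA : V * A = -(A * V))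
    (hR : R.IsPositive) (hR2 : R * R = 1 - A * A) :
    IsOrthogonalProjection ((1 / 2 : ℂ) • (1 + A + R * V)) ∧
    IsOrthogonalProjection ((1 / 2 : ℂ) • (1 - A + R * V)) ∧
    (1 / 2 : ℂ) • (1 + A + R * V) - (1 / 2 : ℂ) • (1 - A + R * V) = A ∧
    (1 / 2 : ℂ) • (1 + A + R * V) + (1 / 2 : ℂ) • (1 - A + R * V) - 1 = R * V := by
  have hRnonneg : 0 ≤ R := (nonneg_iff_isPositive R).mpr hR
  have hRA : Commute R A := .of_mul_self_of_nonneg hRnonneg <| by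
    rw [hR2]; exact (Commute.one_left A).sub_left ((Commute.refl A).mul_left (.refl A))
  have hRV : Commute R V := .of_mul_self_of_nonneg hRnonneg <| by
    rw [hR2]; exact (Commute.one_left V).sub_left (commute_mul_self_of_mul_eq_neg_mul hVA)
  have hS : IsSelfAdjoint (R * V) := (hR.isSelfAdjoint.commute_iff hV.1).mp hRV
  have hSA : R * V * A = -(A * (R * V)) := by
    rw [mul_assoc, hVA, mul_neg, ← mul_assoc, hRA.eq, mul_assoc]
  have hSS : R * V * (R * V) = 1 - A * A := by
    rw [mul_assoc, ← mul_assoc V, ← hRV.eq, mul_assoc, hV.2, mul_one, hR2]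
  refine ⟨isOrthogonalProjection_half_smul_one_add_add hA hS hSA (by rw [hSS]; abel),
    ?_, by module, by module⟩
  rw [sub_eq_add_neg]
  exact isOrthogonalProjection_half_smul_one_add_add hA.neg hS
    (by rw [mul_neg, hSA, neg_mul]) (by rw [neg_mul_neg, hSS]; abel)
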